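/- H₀M possesses a total Elgot iteration as a least fixpoint: for every f : X → H₀M (Y ⊕ X), the map f^‡ defined by f^‡ x = ⊔ₙ f⁽ⁿ⁾ x satisfies the fixpoint law f^‡ = ([η, f^‡])^† ∘ f, and it is the least pre-fixpoint: for every g : X → H₀M Y with ([η, g])^†(f x) ⊑ g x for all x, one has f^‡ x ⊑ g x for all x. -/

import Mathlib

open scoped ENNReal NNReal
open Classical

universe u v w

/-- Raw trajectories: a duration in `ℝ≥0∞` and a partial evolution `ℝ≥0 → Option X`. -/
abbrev Traj (X : Type u) := ℝ≥0∞ × (ℝ≥0 → Option X)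

/-- The flattening condition: if the duration is finite, the evolution is constant
from the duration onwards.  Membership in `H₀M X` means exactly `Flat`. -/
def Flat {X : Type u} (p : Traj X) : Prop :=
  ∀ t : ℝ≥0, p.1 ≤ (t : ℝ≥0∞) → p.2 t = p.2 p.1.toNNReal

/-- The unit of `H₀M`. -/
def eta {X : Type u} (x : X) : Traj X := (0, fun _ => some x)

/-- The Kleisli lifting `f^†` of the monad `H₀M`. -/
noncomputable def kl {X : Type u} {Y : Type v} (f : X → Traj Y) (p : Traj X) : Traj Y :=
  if p.1 = ⊤ then (p.1, fun t => (p.2 t).bind fun x' => (f x').2 0)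
  else
    match p.2 p.1.toNNReal with
    | none => (p.1, fun t => (p.2 t).bind fun x' => (f x').2 0)
    | some x =>
        (p.1 + (f x).1,
          fun t =>
            if (t : ℝ≥0∞) < p.1 then (p.2 t).bind fun x' => (f x').2 0
            else (f x).2 (t - p.1.toNNReal))

/-- Membership in `H₊ X ⊆ H₀M X`: the evolution is not everywhere `none`, and it is
defined at every time instant strictly below the duration. -/
def memHp {X : Type u} (p : Traj X) : Prop :=
  p.2 ≠ (fun _ => none) ∧ ∀ t : ℝ≥0, (t : ℝ≥0∞) < p.1 → p.2 t ≠ none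

/-- Membership in `H X ⊆ H₀M X`: either the evolution is total, or the duration is `∞`
and the domain of the evolution is downward closed. -/
def memH {X : Type u} (p : Traj X) : Prop :=
  (∀ t, p.2 t ≠ none) ∨
    (p.1 = ⊤ ∧ ∀ s t : ℝ≥0, s ≤ t → p.2 t ≠ none → p.2 s ≠ none)

/-- The approximation order `⊑` on `H₀M X`. -/
def TrajLE {X : Type u} (p q : Traj X) : Prop :=
  p.1 ≤ q.1 ∧ (∀ t, p.2 t ≠ none → q.2 t = p.2 t) ∧
    (p.1 ≠ ⊤ → p.2 p.1.toNNReal ≠ none → p.1 = q.1)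

/-- Join of an ω-chain in `H₀M X`: the duration is the supremum of the durations, and
the evolution at `t` is the common value `(c i).2 t` whenever it is `≠ none` for some
`i`, and `none` otherwise. -/
noncomputable def chainJoin {X : Type u} (c : ℕ → Traj X) : Traj X :=
  (⨆ i, (c i).1,
    fun t => if h : ∃ i, (c i).2 t ≠ none then (c h.choose).2 t else none)

/-- `d⋆ = sup { s < d ∣ e is defined on [0, s) }`. -/
noncomputable def dstar {X : Type u} (p : Traj X) : ℝ≥0∞ :=
  sSup {s : ℝ≥0∞ | s < p.1 ∧ ∀ t : ℝ≥0, (t : ℝ≥0∞) < s → p.2 t ≠ none}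

/-- The retraction `ρ : H₀M X → H₀M X` onto `H X`. -/
noncomputable def rho {X : Type u} (p : Traj X) : Traj X :=
  ((if ∀ t, p.2 t ≠ none then p.1 else ⊤),
    fun t =>
      if (t : ℝ≥0∞) ≤ dstar p then p.2 t
      else if ∀ t', p.2 t' ≠ none then p.2 (dstar p).toNNReal else none)

/-- The iterates `f⁽ⁿ⁾` of `f : X → H₀M (Y ⊕ X)`. -/
noncomputable def iter {X Y : Type u} (f : X → Traj (Y ⊕ X)) : ℕ → X → Traj Y
  | 0, _ => (0, fun _ => none)
  | n + 1, x => kl (Sum.elim eta (iter f n)) (f x)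

/-- The least-fixpoint iteration `f^‡ x = ⊔ₙ f⁽ⁿ⁾ x`. -/
noncomputable def iterStar {X Y : Type u} (f : X → Traj (Y ⊕ X)) (x : X) : Traj Y :=
  chainJoin fun n => iter f n x

/-- `f : X → H₊ (A ⊕ B)` is progressive in `B` (guarded in the second summand). -/
def Prog {X : Type u} {A B : Type v} (f : X → Traj (A ⊕ B)) : Prop :=
  ∀ x, ∃ a : A, (f x).2 0 = some (Sum.inl a)


/-!
The iterates `f⁽ⁿ⁾ x` form an ω-chain for `⊑`, and the Kleisli lifting is monotone and
commutes with joins of sequences taken pointwise in its function argument, so `f^‡` is a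
fixpoint by Kleene's argument. A pre-fixpoint `g` dominates every iterate by induction, hence
also their join; flatness of the iterates is what lets the join inherit the clause of `⊑`
about terminating trajectories.
-/

section Order

variable {α : Type*}

lemma trajLE_refl (p : Traj α) : TrajLE p p :=
  ⟨le_rfl, fun _ _ => rfl, fun _ _ => rfl⟩

lemma trajLE_trans {p q r : Traj α} (hpq : TrajLE p q) (hqr : TrajLE q r) : TrajLE p r := by
  obtain ⟨hd₁, he₁, hs₁⟩ := hpq
  obtain ⟨hd₂, he₂, hs₂⟩ := hqr
  refine ⟨hd₁.trans hd₂, fun t ht => ?_, fun hfin hend => ?_⟩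
  · rw [he₂ t (by rwa [he₁ t ht]), he₁ t ht]
  · have hdur : p.1 = q.1 := hs₁ hfin hend
    have hqend : q.2 q.1.toNNReal ≠ none := by rwa [← hdur, he₁ _ hend]
    rw [hdur, hs₂ (hdur ▸ hfin) hqend]

lemma bot_trajLE (q : Traj α) : TrajLE (0, fun _ => none) q :=
  ⟨zero_le, fun _ h => absurd rfl h, fun _ h => absurd rfl h⟩

lemma flat_bot : Flat ((0, fun _ => none) : Traj α) := fun _ _ => rfl

lemma flat_eta (a : α) : Flat (eta a) := fun _ _ => rfl

def TrajChain (c : ℕ → Traj α) : Prop := ∀ n, TrajLE (c n) (c (n + 1))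

lemma TrajChain.trajLE {c : ℕ → Traj α} (hc : TrajChain c) {m n : ℕ} (hmn : m ≤ n) :
    TrajLE (c m) (c n) := by
  induction n, hmn using Nat.le_induction with
  | base => exact trajLE_refl _
  | succ n _ ih => exact trajLE_trans ih (hc n)

end Order

section Join

variable {α β : Type*}

noncomputable def optionJoin (o : ℕ → Option α) : Option α :=
  if h : ∃ i, o i ≠ none then o h.choose else none

lemma chainJoin_snd (c : ℕ → Traj α) (t : ℝ≥0) :
    (chainJoin c).2 t = optionJoin fun i => (c i).2 t := rfl

lemma optionJoin_const (a : Option α) : optionJoin (fun _ => a) = a := by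
  cases a <;> simp [optionJoin]

lemma optionJoin_eq_none {o : ℕ → Option α} (h : ∀ i, o i = none) : optionJoin o = none :=
  dif_neg fun ⟨i, hi⟩ => hi (h i)

lemma optionJoin_bind (o : Option α) (k : ℕ → α → Option β) :
    optionJoin (fun i => o.bind (k i)) = o.bind fun a => optionJoin fun i => k i a := by
  cases o with
  | none => exact optionJoin_eq_none fun _ => rfl
  | some a => rfl

lemma chainJoin_const (p : Traj α) : chainJoin (fun _ => p) = p :=
  Prod.ext iSup_const (funext fun _ => optionJoin_const _)

lemma exists_snd_ne_none_of_chainJoin {c : ℕ → Traj α} {t : ℝ≥0}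
    (ht : (chainJoin c).2 t ≠ none) : ∃ n, (c n).2 t ≠ none := by
  by_contra! h
  exact ht (optionJoin_eq_none h)

namespace TrajChain

variable {c : ℕ → Traj α}

lemma chainJoin_snd_eq (hc : TrajChain c) {n : ℕ} {t : ℝ≥0} (hn : (c n).2 t ≠ none) :
    (chainJoin c).2 t = (c n).2 t := by
  have hex : ∃ i, (c i).2 t ≠ none := ⟨n, hn⟩
  rw [chainJoin_snd, optionJoin, dif_pos hex]
  rcases le_total hex.choose n with h | h
  · exact ((hc.trajLE h).2.1 t hex.choose_spec).symm
  · exact (hc.trajLE h).2.1 t hn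

lemma chainJoin_succ (hc : TrajChain c) : chainJoin (fun n => c (n + 1)) = chainJoin c := by
  have hmono : Monotone fun n => (c n).1 := monotone_nat_of_le_succ fun n => (hc n).1
  refine Prod.ext (hmono.iSup_nat_add 1) (funext fun t => ?_)
  have hc' : TrajChain fun n => c (n + 1) := fun n => hc (n + 1)
  by_cases hex : ∃ n, (c n).2 t ≠ none
  · obtain ⟨n, hn⟩ := hex
    have hn' : (c (n + 1)).2 t ≠ none := by rwa [(hc n).2.1 t hn]
    rw [hc.chainJoin_snd_eq hn, hc'.chainJoin_snd_eq hn', (hc n).2.1 t hn]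
  · push Not at hex
    rw [chainJoin_snd, chainJoin_snd, optionJoin_eq_none hex,
      optionJoin_eq_none fun n => hex (n + 1)]

lemma chainJoin_trajLE (hc : TrajChain c) (hflat : ∀ n, Flat (c n)) {q : Traj α}
    (hq : ∀ n, TrajLE (c n) q) : TrajLE (chainJoin c) q := by
  refine ⟨iSup_le fun n => (hq n).1, fun t ht => ?_, fun hfin hend => ?_⟩
  · obtain ⟨n, hn⟩ := exists_snd_ne_none_of_chainJoin ht
    rw [hc.chainJoin_snd_eq hn, (hq n).2.1 t hn]
  · obtain ⟨n, hn⟩ := exists_snd_ne_none_of_chainJoin hend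
    have hle : (c n).1 ≤ (chainJoin c).1 := le_iSup (fun m => (c m).1) n
    have hnfin : (c n).1 ≠ ⊤ := ne_top_of_le_ne_top hfin hle
    -- `c n` is flat and has already stopped by the time the join does
    have hnend : (c n).2 (c n).1.toNNReal ≠ none := by
      rwa [← hflat n _ (by rwa [ENNReal.coe_toNNReal hfin])]
    exact le_antisymm (iSup_le fun m => (hq m).1) ((hq n).2.2 hnfin hnend ▸ hle)

end TrajChain

end Join

section Kleisli

variable {α β : Type*}

def Terminates (p : Traj α) (a : α) : Prop := p.1 ≠ ⊤ ∧ p.2 p.1.toNNReal = some a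

lemma kl_of_not_terminates {p : Traj α} (hp : ∀ a, ¬ Terminates p a) (g : α → Traj β) :
    kl g p = (p.1, fun t => (p.2 t).bind fun a => (g a).2 0) := by
  unfold kl
  split_ifs with htop
  · rfl
  · split
    · rfl
    · rename_i a ha
      exact absurd ⟨htop, ha⟩ (hp a)

lemma kl_of_terminates {p : Traj α} {a : α} (hp : Terminates p a) (g : α → Traj β) :
    kl g p = (p.1 + (g a).1, fun t : ℝ≥0 =>
      if (t : ℝ≥0∞) < p.1 then (p.2 t).bind fun a' => (g a').2 0
      else (g a).2 (t - p.1.toNNReal)) := by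
  unfold kl; rw [if_neg hp.1, hp.2]

lemma kl_snd_of_terminates_of_le {p : Traj α} {a : α} (hp : Terminates p a) (g : α → Traj β)
    {t : ℝ≥0} (ht : p.1 ≤ t) : (kl g p).2 t = (g a).2 (t - p.1.toNNReal) := by
  rw [kl_of_terminates hp]
  exact if_neg (not_lt.mpr ht)

lemma toNNReal_add_sub_toNNReal {a : ℝ≥0∞} (ha : a ≠ ⊤) (b : ℝ≥0∞) :
    (a + b).toNNReal - a.toNNReal = b.toNNReal := by
  rcases eq_or_ne b ⊤ with rfl | hb
  · simp
  · rw [ENNReal.toNNReal_add ha hb, add_tsub_cancel_left]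

lemma option_bind_eq_of_extends {o : Option α} {k k' : α → Option β}
    (hk : ∀ a, k a ≠ none → k' a = k a) (ho : o.bind k ≠ none) : o.bind k' = o.bind k := by
  cases o with
  | none => exact absurd rfl ho
  | some a => exact hk a ho

lemma kl_mono {g g' : α → Traj β} (hg : ∀ a, TrajLE (g a) (g' a)) (p : Traj α) :
    TrajLE (kl g p) (kl g' p) := by
  have hhead : ∀ t, ((p.2 t).bind fun a => (g a).2 0) ≠ none →
      ((p.2 t).bind fun a => (g' a).2 0) = (p.2 t).bind fun a => (g a).2 0 :=
    fun t => option_bind_eq_of_extends fun a => (hg a).2.1 0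
  by_cases hterm : ∃ a, Terminates p a
  · obtain ⟨a, hpa⟩ := hterm
    refine ⟨?_, fun t ht => ?_, fun hfin hend => ?_⟩
    · rw [kl_of_terminates hpa, kl_of_terminates hpa]
      exact add_le_add le_rfl (hg a).1
    · rw [kl_of_terminates hpa g] at ht ⊢
      rw [kl_of_terminates hpa g']
      dsimp only at ht ⊢
      split_ifs at ht ⊢
      · exact hhead t ht
      · exact (hg a).2.1 _ ht
    · have hdur : (kl g p).1 = p.1 + (g a).1 := by rw [kl_of_terminates hpa]
      have hafin : (g a).1 ≠ ⊤ := fun h => hfin (by rw [hdur, h, add_top])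
      have hend_le : p.1 ≤ (kl g p).1.toNNReal := by
        rw [ENNReal.coe_toNNReal hfin, hdur]; exact le_self_add
      rw [kl_snd_of_terminates_of_le hpa g hend_le, hdur, toNNReal_add_sub_toNNReal hpa.1] at hend
      rw [hdur, kl_of_terminates hpa, (hg a).2.2 hafin hend]
  · push Not at hterm
    rw [kl_of_not_terminates hterm, kl_of_not_terminates hterm]
    exact ⟨le_rfl, hhead, fun _ _ => rfl⟩

lemma flat_kl {g : α → Traj β} {p : Traj α} (hp : Flat p) (hg : ∀ a, Flat (g a)) :
    Flat (kl g p) := by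
  by_cases hterm : ∃ a, Terminates p a
  · obtain ⟨a, hpa⟩ := hterm
    intro t ht
    have hdur : (kl g p).1 = p.1 + (g a).1 := by rw [kl_of_terminates hpa]
    rw [hdur] at ht ⊢
    have hfin : p.1 + (g a).1 ≠ ⊤ := ne_top_of_le_ne_top ENNReal.coe_ne_top ht
    have hpt : p.1 ≤ t := le_self_add.trans ht
    rw [kl_snd_of_terminates_of_le hpa g hpt,
      kl_snd_of_terminates_of_le hpa g (by rw [ENNReal.coe_toNNReal hfin]; exact le_self_add),
      toNNReal_add_sub_toNNReal hpa.1]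
    refine hg a _ ?_
    rw [ENNReal.coe_sub, ENNReal.coe_toNNReal hpa.1]
    exact ENNReal.le_sub_of_add_le_left hpa.1 ht
  · push Not at hterm
    rw [kl_of_not_terminates hterm]
    intro t ht
    dsimp only at ht ⊢
    rw [hp t ht]

lemma chainJoin_kl (g : ℕ → α → Traj β) (p : Traj α) :
    chainJoin (fun n => kl (g n) p) = kl (fun a => chainJoin fun n => g n a) p := by
  by_cases hterm : ∃ a, Terminates p a
  · obtain ⟨a, hpa⟩ := hterm
    simp only [kl_of_terminates hpa]
    refine Prod.ext (ENNReal.add_iSup _).symm (funext fun t => ?_)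
    rw [chainJoin_snd]
    dsimp only
    split_ifs
    · exact optionJoin_bind _ _
    · rfl
  · push Not at hterm
    simp only [kl_of_not_terminates hterm]
    exact Prod.ext iSup_const (funext fun t => optionJoin_bind _ _)

end Kleisli

section SumElim

variable {X Y W : Type*}

lemma trajLE_sumElim {a : Y → Traj W} {h h' : X → Traj W} (hh : ∀ x, TrajLE (h x) (h' x)) :
    ∀ z, TrajLE (Sum.elim a h z) (Sum.elim a h' z)
  | .inl y => trajLE_refl (a y)
  | .inr x => hh x

lemma chainJoin_sumElim (a : Y → Traj W) (h : ℕ → X → Traj W) (z : Y ⊕ X) :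
    chainJoin (fun n => Sum.elim a (h n) z) =
      Sum.elim a (fun x => chainJoin fun n => h n x) z := by
  cases z with
  | inl y => exact chainJoin_const (a y)
  | inr x => rfl

end SumElim

section Iteration

variable {X Y : Type u}

lemma iter_trajChain (f : X → Traj (Y ⊕ X)) (x : X) : TrajChain fun n => iter f n x := by
  intro n
  induction n generalizing x with
  | zero => exact bot_trajLE _
  | succ n ih => exact kl_mono (trajLE_sumElim ih) (f x)

lemma flat_iter {f : X → Traj (Y ⊕ X)} (hf : ∀ x, Flat (f x)) (n : ℕ) (x : X) :
    Flat (iter f n x) := by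
  induction n generalizing x with
  | zero => exact flat_bot
  | succ n ih =>
    refine flat_kl (hf x) fun z => ?_
    cases z with
    | inl y => exact flat_eta y
    | inr x' => exact ih x'

lemma iter_trajLE_of_prefixpoint {f : X → Traj (Y ⊕ X)} {g : X → Traj Y}
    (hg : ∀ x, TrajLE (kl (Sum.elim eta g) (f x)) (g x)) (n : ℕ) (x : X) :
    TrajLE (iter f n x) (g x) := by
  induction n generalizing x with
  | zero => exact bot_trajLE _
  | succ n ih => exact trajLE_trans (kl_mono (trajLE_sumElim ih) (f x)) (hg x)

end Iteration

/-- `H₀M` possesses a total Elgot iteration as a least fixpoint: `f^‡` satisfies the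
fixpoint law and is the least pre-fixpoint. -/
theorem iterStar_least_fixpoint {X Y : Type u} (f : X → Traj (Y ⊕ X))
    (hf : ∀ x, Flat (f x)) :
    (∀ x, iterStar f x = kl (Sum.elim eta (iterStar f)) (f x)) ∧
    (∀ g : X → Traj Y, (∀ x, Flat (g x)) →
      (∀ x, TrajLE (kl (Sum.elim eta g) (f x)) (g x)) →
      ∀ x, TrajLE (iterStar f x) (g x)) := by
  refine ⟨fun x => ?_, fun g _ hg x => ?_⟩
  · calc iterStar f x = chainJoin fun n => iter f (n + 1) x :=
          ((iter_trajChain f x).chainJoin_succ).symm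
      _ = kl (fun z => chainJoin fun n => Sum.elim eta (iter f n) z) (f x) :=
          chainJoin_kl _ _
      _ = kl (Sum.elim eta (iterStar f)) (f x) := by
          simp only [chainJoin_sumElim]
          rfl
  · exact (iter_trajChain f x).chainJoin_trajLE (fun n => flat_iter hf n x)
      fun n => iter_trajLE_of_prefixpoint hg n x
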